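/- Let p, q be primes, n ≥ 2 and c ≥ 1. Then the group G_{V,p,c} is finite and nilpotent of class at most c. -/

import Mathlib

/-- The commutator `[x, y] = x⁻¹ * y⁻¹ * x * y`. -/
def pComm {G : Type*} [Group G] (x y : G) : G := x⁻¹ * y⁻¹ * x * y

/-- The left-normed higher commutator: `lnComm x [y₁, …, y_m] = [x, y₁, …, y_m]`,
where `[x₁, …, x_m] = [[x₁, …, x_{m-1}], x_m]`. -/
def lnComm {G : Type*} [Group G] : G → List G → G
  | x, [] => x
  | x, y :: l => lnComm (pComm x y) l

/-- The relations of the presented group `H_{p,c}`. -/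
def Hrels (p c : ℕ) : Set (FreeGroup (Fin 2)) :=
  {w | (∃ i : Fin 2, w = FreeGroup.of i ^ p) ∨
       (∃ (i : Fin 2) (t : Fin c → Fin 2),
          w = lnComm (FreeGroup.of i) ((List.ofFn t).map FreeGroup.of))}

/-- The group `H_{p,c}` presented by two generators `a₁, a₂` with relations
`a₁^p = a₂^p = 1` and `[a_{i₀}, a_{i₁}, …, a_{i_c}] = 1` for all tuples
`(i₀, …, i_c) ∈ {1,2}^{c+1}`. -/
abbrev Hgroup (p c : ℕ) : Type := PresentedGroup (Hrels p c)

/-- The relations of the presented group `G_{V,p,c}`, where `V = (ZMod q)^n`: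
every generator `v ∈ V` satisfies `v^p = 1`, every left-normed commutator of
`c + 1` generators is trivial, and `[v, w] = 1` whenever
`v - w ∈ V₁ ∪ ⋯ ∪ V_n`, i.e. whenever `v` and `w` agree in some coordinate. -/
def Grels (p q c n : ℕ) : Set (FreeGroup (Fin n → ZMod q)) :=
  {g | (∃ v : Fin n → ZMod q, g = FreeGroup.of v ^ p) ∨
       (∃ (v : Fin n → ZMod q) (t : Fin c → (Fin n → ZMod q)),
          g = lnComm (FreeGroup.of v) ((List.ofFn t).map FreeGroup.of)) ∨
       (∃ v w : Fin n → ZMod q, (∃ i : Fin n, (v - w) i = 0) ∧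
          g = pComm (FreeGroup.of v) (FreeGroup.of w))}

/-- The group `G_{V,p,c}` presented with the vector space `V = (ZMod q)^n` as
set of generators, subject to the relations `Grels p q c n`. -/
abbrev Ggroup (p q c n : ℕ) : Type := PresentedGroup (Grels p q c n)

open scoped commutatorElement

section AuxNilpotent
variable {G : Type*} [Group G] {H : Type*} [Group H]

lemma lnComm_append (x : G) (l₁ l₂ : List G) :
    lnComm x (l₁ ++ l₂) = lnComm (lnComm x l₁) l₂ := by
  induction l₁ generalizing x with
  | nil => rfl
  | cons y l ih => simp [lnComm, ih]

lemma map_lnComm (f : G →* H) (x : G) (l : List G) :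
    f (lnComm x l) = lnComm (f x) (l.map f) := by
  induction l generalizing x with
  | nil => rfl
  | cons y l ih => simp [lnComm, ih, pComm]

lemma lnComm_mem_lcs (x : G) (l : List G) (k : ℕ) (hx : x ∈ Subgroup.lowerCentralSeries ⊤ k) :
    lnComm x l ∈ Subgroup.lowerCentralSeries ⊤ (k + l.length) := by
  induction l generalizing x k with
  | nil => simpa [lnComm] using hx
  | cons y l ih =>
    have h1 : pComm x y ∈ Subgroup.lowerCentralSeries ⊤ (k + 1) := by
      rw [lowerCentralSeries_succ]
      have : pComm x y = ⁅x⁻¹, y⁻¹⁆ := by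
        simp [pComm, commutatorElement_def]
      rw [this]
      exact Subgroup.commutator_mem_commutator (inv_mem hx) (Subgroup.mem_top _)
    have := ih (pComm x y) (k + 1) h1
    simpa [lnComm, Nat.add_assoc, Nat.add_comm, Nat.add_left_comm] using this

lemma ucs_top_of_gen_comm (S : Set G) (hS : Subgroup.closure S = ⊤) (c : ℕ)
    (hcomm : ∀ s ∈ S, ∀ l : List G, (∀ x ∈ l, x ∈ S) → l.length = c → lnComm s l = 1) :
    Subgroup.upperCentralSeries G c = ⊤ := by
  have claim : ∀ k, ∀ s ∈ S, ∀ l : List G, (∀ x ∈ l, x ∈ S) → l.length + k = c →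
      lnComm s l ∈ Subgroup.upperCentralSeries G k := by
    intro k
    induction k with
    | zero =>
      intro s hs l hl hlen
      rw [hcomm s hs l hl (by omega)]
      exact one_mem _
    | succ k ih =>
      intro s hs l hl hlen
      rw [Subgroup.mem_upperCentralSeries_succ_iff]
      set w := lnComm s l with hw
      have key : ∀ y ∈ Subgroup.closure S, w * y * w⁻¹ * y⁻¹ ∈ Subgroup.upperCentralSeries G k := by
        intro y hy
        induction hy using Subgroup.closure_induction with
        | mem t ht =>
          have h1 : lnComm s (l ++ [t]) ∈ Subgroup.upperCentralSeries G k :=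
            ih s hs (l ++ [t]) (by
              intro x hx
              rcases List.mem_append.mp hx with h | h
              · exact hl x h
              · simpa using (List.mem_singleton.mp h) ▸ ht) (by simp; omega)
          have heq : w * t * w⁻¹ * t⁻¹ = (t * w) * (lnComm s (l ++ [t])) * (t * w)⁻¹ := by
            rw [lnComm_append]
            show _ = _ * (lnComm (pComm w t) []) * _
            simp only [lnComm, pComm]
            group
          rw [heq]
          exact Subgroup.Normal.conj_mem (inferInstance : (Subgroup.upperCentralSeries G k).Normal) _ h1 _
        | one => simpa using one_mem _
        | mul y z _ _ ihy ihz =>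
          have heq : w * (y * z) * w⁻¹ * (y * z)⁻¹ =
              (w * y * w⁻¹ * y⁻¹) * (y * (w * z * w⁻¹ * z⁻¹) * y⁻¹) := by group
          rw [heq]
          exact mul_mem ihy (Subgroup.Normal.conj_mem (inferInstance : (Subgroup.upperCentralSeries G k).Normal) _ ihz _)
        | inv y _ ihy =>
          have heq : w * y⁻¹ * w⁻¹ * y⁻¹⁻¹ = y⁻¹ * (w * y * w⁻¹ * y⁻¹)⁻¹ * y⁻¹⁻¹ := by group
          rw [heq]
          exact Subgroup.Normal.conj_mem (inferInstance : (Subgroup.upperCentralSeries G k).Normal) _ (inv_mem ihy) _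
      intro y
      exact key y (by rw [hS]; exact Subgroup.mem_top y)
  rw [eq_top_iff, ← hS, Subgroup.closure_le]
  intro s hs
  have := claim c s hs [] (by simp) (by simp)
  simpa [lnComm] using this

lemma finite_of_abelian_gen (p : ℕ) (hp : p ≠ 0) (S : Set G) (hfin : S.Finite)
    (hgen : Subgroup.closure S = ⊤) (hpow : ∀ s ∈ S, s ^ p = 1)
    (hcomm : ∀ a b : G, a * b = b * a) : Finite G := by
  haveI : NeZero p := ⟨hp⟩
  letI : CommGroup G := { ‹Group G› with mul_comm := hcomm }
  classical
  letI := hfin.fintype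
  let φ : (S → ZMod p) → G := fun f => ∏ s : S, (s : G) ^ (f s).val
  have hkey : ∀ (x : G), x ∈ S → ∀ a b : ZMod p, x ^ a.val * x ^ b.val = x ^ (a + b).val := by
    intro x hx a b
    rw [← pow_add, ZMod.val_add, ← pow_eq_pow_mod _ (hpow x hx)]
  have hφmul : ∀ f g, φ f * φ g = φ (f + g) := by
    intro f g
    simp only [φ, ← Finset.prod_mul_distrib]
    refine Finset.prod_congr rfl fun s _ => hkey s s.2 (f s) (g s)
  have hφzero : φ 0 = 1 := by simp [φ]
  have hrange : ∀ x : G, x ∈ Set.range φ := by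
    intro x
    have hx : x ∈ Subgroup.closure S := by rw [hgen]; exact Subgroup.mem_top x
    induction hx using Subgroup.closure_induction with
    | mem t ht =>
      refine ⟨fun s => if s = ⟨t, ht⟩ then 1 else 0, ?_⟩
      show ∏ s : S, (s : G) ^ ((if s = ⟨t, ht⟩ then (1 : ZMod p) else 0)).val = t
      rw [Finset.prod_eq_single (⟨t, ht⟩ : S)]
      · rw [if_pos rfl, ZMod.val_one_eq_one_mod, ← pow_eq_pow_mod _ (hpow t ht), pow_one]
      · intro b _ hb
        rw [if_neg hb, ZMod.val_zero, pow_zero]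
      · simp
    | one => exact ⟨0, hφzero⟩
    | mul y z _ _ ihy ihz =>
      obtain ⟨f, rfl⟩ := ihy
      obtain ⟨g, rfl⟩ := ihz
      exact ⟨f + g, (hφmul f g).symm⟩
    | inv y _ ihy =>
      obtain ⟨f, rfl⟩ := ihy
      refine ⟨-f, eq_inv_of_mul_eq_one_left ?_⟩
      rw [hφmul]
      simpa using hφzero
  exact Finite.of_surjective φ (fun x => hrange x)

lemma commutator_mul_central_left {z : G} (hz : ∀ g : G, z * g = g * z) (a b : G) :
    ⁅a * z, b⁆ = ⁅a, b⁆ := by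
  have hzb : z * b * z⁻¹ = b := by rw [hz b, mul_inv_cancel_right]
  have : ⁅a * z, b⁆ = a * (z * b * z⁻¹) * a⁻¹ * b⁻¹ := by group
  rw [this, hzb, ← commutatorElement_def]

lemma commutator_mul_central_right {z : G} (hz : ∀ g : G, z * g = g * z) (a b : G) :
    ⁅a, b * z⁆ = ⁅a, b⁆ := by
  have hza : z * a⁻¹ * z⁻¹ = a⁻¹ := by rw [hz a⁻¹, mul_inv_cancel_right]
  have : ⁅a, b * z⁆ = a * b * (z * a⁻¹ * z⁻¹) * b⁻¹ := by group
  rw [this, hza, ← commutatorElement_def]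

lemma finite_commutatorSet_of_finite_quotient_center
    (h : Finite (G ⧸ Subgroup.center G)) : Finite (commutatorSet G) := by
  set Z := Subgroup.center G
  have hsub : commutatorSet G ⊆
      Set.range (fun x : (G ⧸ Z) × (G ⧸ Z) => ⁅x.1.out, x.2.out⁆) := by
    rintro - ⟨a, b, rfl⟩
    refine ⟨(QuotientGroup.mk a, QuotientGroup.mk b), ?_⟩
    obtain ⟨⟨z₁, hz₁⟩, h₁⟩ := QuotientGroup.mk_out_eq_mul Z a
    obtain ⟨⟨z₂, hz₂⟩, h₂⟩ := QuotientGroup.mk_out_eq_mul Z b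
    have c₁ : ∀ g : G, z₁ * g = g * z₁ := fun g => (Subgroup.mem_center_iff.mp hz₁ g).symm
    have c₂ : ∀ g : G, z₂ * g = g * z₂ := fun g => (Subgroup.mem_center_iff.mp hz₂ g).symm
    simp only [h₁, h₂]
    rw [commutator_mul_central_left c₁, commutator_mul_central_right c₂]
  exact Finite.Set.subset _ hsub

end AuxNilpotent

section AuxFinite
universe u

lemma finite_of_ucs_top (p : ℕ) (hp : p ≠ 0) :
    ∀ (c : ℕ) (G : Type u) (_ : Group G) (S : Set G), S.Finite → Subgroup.closure S = ⊤ →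
      (∀ s ∈ S, s ^ p = 1) → Subgroup.upperCentralSeries G c = ⊤ → Finite G := by
  intro c
  induction c with
  | zero =>
    intro G _ S _ _ _ htop
    rw [Subgroup.upperCentralSeries_zero] at htop
    have : Subsingleton G := by
      constructor
      intro a b
      have ha : a ∈ (⊥ : Subgroup G) := htop ▸ Subgroup.mem_top a
      have hb : b ∈ (⊥ : Subgroup G) := htop ▸ Subgroup.mem_top b
      rw [Subgroup.mem_bot] at ha hb
      rw [ha, hb]
    exact Finite.of_subsingleton
  | succ c ih =>
    intro G _ S hfin hgen hpow htop
    set Z := Subgroup.center G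
    set π := QuotientGroup.mk' Z
    have hQ : Subgroup.upperCentralSeries (G ⧸ Z) c = ⊤ := by
      have hcom := comap_upperCentralSeries_quotient_center (G := G) c
      rw [Nat.succ_eq_add_one, htop] at hcom
      have := congrArg (Subgroup.map π) hcom
      rwa [Subgroup.map_comap_eq_self_of_surjective (QuotientGroup.mk'_surjective Z),
        Subgroup.map_top_of_surjective π (QuotientGroup.mk'_surjective Z)] at this
    have hgenQ : Subgroup.closure (π '' S) = ⊤ := by
      rw [← MonoidHom.map_closure, hgen,
        Subgroup.map_top_of_surjective π (QuotientGroup.mk'_surjective Z)]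
    have hpowQ : ∀ s ∈ π '' S, s ^ p = 1 := by
      rintro - ⟨s, hs, rfl⟩
      rw [← map_pow, hpow s hs, map_one]
    have hQfin : Finite (G ⧸ Z) := ih (G ⧸ Z) _ (π '' S) (hfin.image π) hgenQ hpowQ hQ
    haveI : Finite (commutatorSet G) := finite_commutatorSet_of_finite_quotient_center hQfin
    set C := _root_.commutator G
    haveI hCfin : Finite C := inferInstance
    have hab : ∀ a b : G ⧸ C, a * b = b * a := by
      intro a b
      induction a using QuotientGroup.induction_on
      induction b using QuotientGroup.induction_on
      rename_i a b
      rw [← QuotientGroup.mk_mul, ← QuotientGroup.mk_mul, QuotientGroup.eq]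
      have : (a * b)⁻¹ * (b * a) = ⁅b⁻¹, a⁻¹⁆ := by group
      rw [this]
      exact Subgroup.commutator_mem_commutator (Subgroup.mem_top _) (Subgroup.mem_top _)
    have hAfin : Finite (G ⧸ C) := by
      refine finite_of_abelian_gen p hp (QuotientGroup.mk' C '' S) (hfin.image _) ?_ ?_ hab
      · rw [← MonoidHom.map_closure, hgen,
          Subgroup.map_top_of_surjective _ (QuotientGroup.mk'_surjective C)]
      · rintro - ⟨s, hs, rfl⟩
        rw [← map_pow, hpow s hs, map_one]
    exact Finite.of_equiv ((G ⧸ C) × C) (Subgroup.groupEquivQuotientProdSubgroup (s := C)).symm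

end AuxFinite

lemma Grels_mk_eq_one {p q c n : ℕ} {r : FreeGroup (Fin n → ZMod q)}
    (hr : r ∈ Grels p q c n) : PresentedGroup.mk (Grels p q c n) r = 1 :=
  (QuotientGroup.eq_one_iff r).mpr (Subgroup.subset_normalClosure hr)

/-- For primes `p, q`, `n ≥ 2` and `c ≥ 1`, the group `G_{V,p,c}` is finite
and nilpotent of class at most `c` (every left-normed commutator of `c + 1`
elements is trivial). -/
theorem stmt_7 (p q : ℕ) (hp : p.Prime) (hq : q.Prime) (n c : ℕ)
    (hn : 2 ≤ n) (hc : 1 ≤ c) :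
    Finite (Ggroup p q c n) ∧
    ∀ (x : Ggroup p q c n) (l : List (Ggroup p q c n)),
      l.length = c → lnComm x l = 1 := by
  haveI : NeZero q := ⟨hq.ne_zero⟩
  set S : Set (Ggroup p q c n) :=
    Set.range (PresentedGroup.of (rels := Grels p q c n)) with hSdef
  have hfin : S.Finite := Set.finite_range _
  have hgen : Subgroup.closure S = ⊤ := PresentedGroup.closure_range_of _
  have hpow : ∀ s ∈ S, s ^ p = 1 := by
    rintro - ⟨v, rfl⟩
    have h1 := Grels_mk_eq_one (p := p) (q := q) (c := c) (n := n)
      (Or.inl ⟨v, rfl⟩)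
    rwa [map_pow] at h1
  have hcomm : ∀ s ∈ S, ∀ l : List (Ggroup p q c n), (∀ x ∈ l, x ∈ S) →
      l.length = c → lnComm s l = 1 := by
    rintro - ⟨v, rfl⟩ l hl hlen
    obtain ⟨l', rfl⟩ : ∃ l' : List (Fin n → ZMod q),
        l = List.map PresentedGroup.of l' := by
      clear hlen
      induction l with
      | nil => exact ⟨[], rfl⟩
      | cons x l ih =>
        obtain ⟨l', rfl⟩ := ih (fun y hy => hl y (List.mem_cons_of_mem _ hy))
        obtain ⟨v', hv'⟩ := hl x (List.mem_cons_self)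
        exact ⟨v' :: l', by rw [List.map_cons, hv']⟩
    rw [List.length_map] at hlen
    obtain ⟨t, rfl⟩ : ∃ t : Fin c → (Fin n → ZMod q), l' = List.ofFn t := by
      refine ⟨fun i => l'.get (Fin.cast hlen.symm i), ?_⟩
      refine List.ext_get (by simp [hlen]) (fun i h1 h2 => ?_)
      simp [List.getElem_ofFn]
    have h1 := Grels_mk_eq_one (p := p) (q := q) (c := c) (n := n)
      (Or.inr (Or.inl ⟨v, t, rfl⟩))
    rw [map_lnComm, List.map_map] at h1
    exact h1
  have hucs : Subgroup.upperCentralSeries (Ggroup p q c n) c = ⊤ :=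
    ucs_top_of_gen_comm S hgen c hcomm
  constructor
  · exact finite_of_ucs_top p hp.ne_zero c (Ggroup p q c n) _ S hfin hgen hpow hucs
  · haveI : Group.IsNilpotent (Ggroup p q c n) := ⟨⟨c, hucs⟩⟩
    have hlcs : Subgroup.lowerCentralSeries (⊤ : Subgroup (Ggroup p q c n)) c = ⊥ :=
      lowerCentralSeries_eq_bot_iff_nilpotencyClass_le.mpr
        (upperCentralSeries_eq_top_iff_nilpotencyClass_le.mp hucs)
    intro x l hlen
    have hm := lnComm_mem_lcs x l 0 (by rw [lowerCentralSeries_zero]; exact Subgroup.mem_top x)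
    rw [Nat.zero_add, hlen, hlcs, Subgroup.mem_bot] at hm
    exact hm
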